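/- Let 0 < s, p < ∞ with sp = d, and let ε > 0. Then there exists a constant c = c(d, s, p, ε) < ∞ such that for every function u : ℤ₊^d → ℂ with u(0) = 0, one has ∑_{j ∈ ℤ₊^d \ {0}} |u(j)|^p / ‖j‖_∞^{sp+ε} ≤ c · ∑_{j ∈ ℤ₊^d} ∑_{m ∈ ℤ₊^d, m ≠ j} |u(j) − u(m)|^p / ‖j − m‖_∞^{sp+d+ε} ≤ c · ∑_{j ∈ ℤ₊^d} ∑_{m ∈ ℤ₊^d, m ≠ j} |u(j) − u(m)|^p / ‖j − m‖_∞^{sp+d}. -/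

import Mathlib

open scoped ENNReal

/-- The sup-norm `‖x‖_∞` of a point of `ℤ₊^d`, as a real number. -/
noncomputable def nsup {d : ℕ} (x : Fin d → ℕ) : ℝ := ((Finset.univ.sup x : ℕ) : ℝ)

/-- The sup-norm `‖j - m‖_∞` of the difference of two points of `ℤ₊^d`, as a real number. -/
noncomputable def ndist {d : ℕ} (j m : Fin d → ℕ) : ℝ :=
  ((Finset.univ.sup fun i => ((j i : ℤ) - (m i : ℤ)).natAbs : ℕ) : ℝ)

/-!
For `j ≠ 0` average the inequality `‖u j‖^p ≤ 2^p (‖u j - u m‖^p + ‖u m‖^p)` over the cube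
`Q_j = {0, …, ⌊δ ‖j‖⌋}^d`: it has at least `(δ ‖j‖)^d` points, all within distance `‖j‖` of `j`,
so `‖u j‖^p / ‖j‖^(d+ε)` is at most `2^p δ^(-d)` times the part of the double sum with `m ∈ Q_j`,
plus the error term `2^p δ^(-d) ‖j‖^(-(2d+ε)) ∑_{m ∈ Q_j} ‖u m‖^p`. Summed over `j`, the error
term is at most `d 2^d δ^(d+ε) ∑_m ‖u m‖^p / ‖m‖^(d+ε)`, because counting shells gives
`∑_{‖j‖ ≥ R} ‖j‖^(-(2d+ε)) ≤ d 2^d R^(-(d+ε))`. For small `δ` it is absorbed by the left-hand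
side; this is done over the finite cubes `{0, …, N}^d`, where every sum is finite, before letting
`N → ∞`. The second inequality holds termwise since `‖j - m‖_∞ ≥ 1` for `j ≠ m`.
-/

open Finset

lemma Real.add_rpow_le_two_rpow_mul_rpow_add_rpow {p a b : ℝ} (hp : 0 ≤ p) (ha : 0 ≤ a)
    (hb : 0 ≤ b) : (a + b) ^ p ≤ 2 ^ p * (a ^ p + b ^ p) := calc
  (a + b) ^ p ≤ (2 * max a b) ^ p := by gcongr; rw [two_mul]; gcongr <;> simp
  _ = 2 ^ p * max a b ^ p := Real.mul_rpow zero_le_two (le_max_of_le_left ha)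
  _ ≤ 2 ^ p * (a ^ p + b ^ p) := by
    have := Real.rpow_nonneg ha p
    have := Real.rpow_nonneg hb p
    gcongr
    rcases le_total a b with h | h
    · rw [max_eq_right h]; linarith
    · rw [max_eq_left h]; linarith

variable {E : Type*} [SeminormedAddCommGroup E]

lemma norm_rpow_le_two_rpow_mul {p : ℝ} (hp : 0 ≤ p) (x y : E) : ‖x‖ ^ p ≤ 2 ^ p * (‖x - y‖ ^ p + ‖y‖ ^ p) := calc
  ‖x‖ ^ p ≤ (‖x - y‖ + ‖y‖) ^ p := by gcongr; exact norm_le_norm_sub_add x y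
  _ ≤ _ := Real.add_rpow_le_two_rpow_mul_rpow_add_rpow hp (norm_nonneg _) (norm_nonneg _)

lemma exists_pos_lt_one_rpow_le {ε η : ℝ} (hε : 0 < ε) (hη : 0 < η) :
    ∃ δ : ℝ, 0 < δ ∧ δ < 1 ∧ δ ^ ε ≤ η := by
  refine ⟨min (1 / 2) (η ^ ε⁻¹), by positivity, by linarith [min_le_left (1 / 2 : ℝ) (η ^ ε⁻¹)],
    ?_⟩
  calc min (1 / 2) (η ^ ε⁻¹) ^ ε ≤ (η ^ ε⁻¹) ^ ε := by gcongr; exact min_le_right _ _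
    _ = η := Real.rpow_inv_rpow hη.le hε.ne'

def cube (d k : ℕ) : Finset (Fin d → ℕ) := Iic fun _ => k

variable {d : ℕ}

lemma mem_cube {k : ℕ} {j : Fin d → ℕ} : j ∈ cube d k ↔ univ.sup j ≤ k := by
  simp [cube, Pi.le_def]

lemma card_cube (d k : ℕ) : #(cube d k) = (k + 1) ^ d := by
  simp [cube, Pi.card_Iic]

lemma nsup_nonneg (j : Fin d → ℕ) : 0 ≤ nsup j := Nat.cast_nonneg _

lemma one_le_nsup {j : Fin d → ℕ} (hj : j ≠ 0) : 1 ≤ nsup j := by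
  have : univ.sup j ≠ 0 := fun h =>
    hj (funext fun i => by simpa using (Finset.sup_eq_bot_iff _ _).1 h i)
  exact Nat.one_le_cast.2 (Nat.one_le_iff_ne_zero.2 this)

lemma one_le_ndist {j m : Fin d → ℕ} (h : m ≠ j) : 1 ≤ ndist j m := by
  obtain ⟨i, hi⟩ := Function.ne_iff.1 h
  have : 1 ≤ ((j i : ℤ) - m i).natAbs := by omega
  exact Nat.one_le_cast.2
    (this.trans (le_sup (f := fun i => ((j i : ℤ) - m i).natAbs) (mem_univ i)))

lemma ndist_le_nsup {j m : Fin d → ℕ} (h : univ.sup m ≤ univ.sup j) : ndist j m ≤ nsup j := by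
  refine Nat.cast_le.2 (Finset.sup_le fun i _ => ?_)
  have hj : j i ≤ univ.sup j := le_sup (mem_univ i)
  have hm : m i ≤ univ.sup m := le_sup (mem_univ i)
  omega

lemma card_filter_sup_eq_le {R : ℕ} (hR : 1 ≤ R) :
    (#{j ∈ cube d R | univ.sup j = R} : ℝ) ≤ d * (R + 1) ^ (d - 1) := by
  have hsub : cube d (R - 1) ⊆ cube d R := fun j hj => mem_cube.2 ((mem_cube.1 hj).trans (by omega))
  have hshell : {j ∈ cube d R | univ.sup j = R} = cube d R \ cube d (R - 1) := by
    ext j; simp only [mem_filter, mem_sdiff, mem_cube]; omega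
  rw [hshell, card_sdiff_of_subset hsub, Nat.cast_sub (card_le_card hsub), card_cube, card_cube,
    Nat.sub_add_cancel hR]
  have hpow := abs_pow_sub_pow_le ((R : ℝ) + 1) R d
  have hR0 : (0 : ℝ) ≤ R := R.cast_nonneg
  rw [add_sub_cancel_left, abs_one, one_mul, abs_of_nonneg hR0,
    abs_of_nonneg (show (0 : ℝ) ≤ R + 1 by positivity),
    max_eq_left (by linarith)] at hpow
  push_cast
  exact (le_abs_self _).trans hpow

lemma sum_inv_nsup_rpow_tail_le (hd : 1 ≤ d) {t : ℝ} (ht : 1 ≤ t) {n : ℕ} (hn : 1 ≤ n)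
    (N : ℕ) : ∑ j ∈ cube d N with n ≤ univ.sup j, (nsup j ^ (d + t))⁻¹ ≤ d * 2 ^ d / n ^ t := by
  have hn0 : (0 : ℝ) < n := by exact_mod_cast hn
  have hmaps : ∀ j ∈ {j ∈ cube d N | n ≤ univ.sup j}, univ.sup j ∈ Icc n N := by
    intro j hj
    rw [mem_filter, mem_cube] at hj
    exact mem_Icc.2 ⟨hj.2, hj.1⟩
  have hshell : ∀ R ∈ Icc n N, ∑ j ∈ {j ∈ cube d N | n ≤ univ.sup j} with univ.sup j = R,
      (nsup j ^ (d + t))⁻¹ ≤ d * 2 ^ (d - 1) / n ^ (t - 1) * ((R : ℝ) ^ 2)⁻¹ := by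
    intro R hR
    rw [mem_Icc] at hR
    have hR0 : (0 : ℝ) < R := by exact_mod_cast hn.trans hR.1
    have hsub : {j ∈ {j ∈ cube d N | n ≤ univ.sup j} | univ.sup j = R} ⊆
        {j ∈ cube d R | univ.sup j = R} := by
      intro j; simp only [mem_filter, mem_cube]; omega
    have hsplit : (R : ℝ) ^ ((d : ℝ) + t) = R ^ (d - 1) * R ^ (t - 1) * R ^ 2 := by
      rw [← Real.rpow_natCast, ← Real.rpow_natCast _ 2, ← Real.rpow_add hR0, ← Real.rpow_add hR0]
      congr 1
      push_cast [Nat.cast_sub hd]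
      ring
    calc ∑ j ∈ {j ∈ cube d N | n ≤ univ.sup j} with univ.sup j = R, (nsup j ^ (d + t))⁻¹
        = #{j ∈ {j ∈ cube d N | n ≤ univ.sup j} | univ.sup j = R} * ((R : ℝ) ^ (d + t))⁻¹ := by
          rw [← nsmul_eq_mul, ← sum_const]
          exact sum_congr rfl fun j hj => by rw [nsup, (mem_filter.1 hj).2]
      _ ≤ d * (R + 1) ^ (d - 1) * ((R : ℝ) ^ (d + t))⁻¹ := by
          gcongr
          exact (Nat.cast_le.2 (card_le_card hsub)).trans (card_filter_sup_eq_le (hn.trans hR.1))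
      _ ≤ d * (2 * R) ^ (d - 1) * ((R : ℝ) ^ (d + t))⁻¹ := by
          gcongr
          linarith [(Nat.one_le_cast (α := ℝ)).2 (hn.trans hR.1)]
      _ = d * 2 ^ (d - 1) / R ^ (t - 1) * ((R : ℝ) ^ 2)⁻¹ := by
          rw [hsplit, mul_pow]
          field_simp
      _ ≤ d * 2 ^ (d - 1) / n ^ (t - 1) * ((R : ℝ) ^ 2)⁻¹ := by
          gcongr
          linarith
  have hinvsq : ∑ R ∈ Icc n N, ((R : ℝ) ^ 2)⁻¹ ≤ 2 / n := by
    have h := sum_Ioo_inv_sq_le (α := ℝ) (n - 1) (N + 1)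
    rwa [show Ioo (n - 1) (N + 1) = Icc n N by ext; simp only [mem_Ioo, mem_Icc]; omega,
      Nat.cast_sub hn, Nat.cast_one, sub_add_cancel] at h
  calc ∑ j ∈ cube d N with n ≤ univ.sup j, (nsup j ^ (d + t))⁻¹
      = ∑ R ∈ Icc n N, ∑ j ∈ {j ∈ cube d N | n ≤ univ.sup j} with univ.sup j = R,
          (nsup j ^ (d + t))⁻¹ := (sum_fiberwise_of_maps_to hmaps _).symm
    _ ≤ ∑ R ∈ Icc n N, d * 2 ^ (d - 1) / n ^ (t - 1) * ((R : ℝ) ^ 2)⁻¹ := sum_le_sum hshell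
    _ ≤ d * 2 ^ (d - 1) / n ^ (t - 1) * (2 / n) := by rw [← mul_sum]; gcongr
    _ = d * 2 ^ d / n ^ t := by
      rw [Real.rpow_sub_one hn0.ne', ← pow_sub_one_mul (by omega : d ≠ 0)]
      field_simp

lemma sum_inv_nsup_rpow_scaled_tail_le (hd : 1 ≤ d) {t δ : ℝ} (ht : 1 ≤ t) (hδ : 0 < δ)
    {m : Fin d → ℕ} (hm : m ≠ 0) (N : ℕ) :
    ∑ j ∈ cube d N with nsup m ≤ δ * nsup j, (nsup j ^ (d + t))⁻¹ ≤
      d * 2 ^ d * δ ^ t / nsup m ^ t := by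
  have hm1 := one_le_nsup hm
  set n := ⌈nsup m / δ⌉₊
  have hn : 1 ≤ n := Nat.ceil_pos.2 (by positivity)
  have hsub : {j ∈ cube d N | nsup m ≤ δ * nsup j} ⊆ {j ∈ cube d N | n ≤ univ.sup j} :=
    monotone_filter_right _ fun j _ hj => Nat.ceil_le.2 ((div_le_iff₀' hδ).2 hj)
  calc ∑ j ∈ cube d N with nsup m ≤ δ * nsup j, (nsup j ^ (d + t))⁻¹
      ≤ ∑ j ∈ cube d N with n ≤ univ.sup j, (nsup j ^ (d + t))⁻¹ :=
        sum_le_sum_of_subset_of_nonneg hsub fun j _ _ => by have := nsup_nonneg j; positivity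
    _ ≤ d * 2 ^ d / n ^ t := sum_inv_nsup_rpow_tail_le hd ht hn N
    _ ≤ d * 2 ^ d / (nsup m / δ) ^ t := by gcongr; exact Nat.le_ceil _
    _ = d * 2 ^ d * δ ^ t / nsup m ^ t := by
      rw [Real.div_rpow (by positivity) hδ.le]
      field_simp

lemma sum_cube_sum_cube_floor_div_le (hd : 1 ≤ d) {t δ : ℝ} (ht : 1 ≤ t) (hδ0 : 0 < δ)
    (hδ1 : δ ≤ 1) {g : (Fin d → ℕ) → ℝ} (hg : 0 ≤ g) (hg0 : g 0 = 0) (N : ℕ) :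
    ∑ j ∈ cube d N, (∑ m ∈ cube d ⌊δ * nsup j⌋₊, g m) / nsup j ^ (d + t) ≤
      d * 2 ^ d * δ ^ t * ∑ m ∈ cube d N, g m / nsup m ^ t := by
  have hswap : ∀ j m, j ∈ cube d N ∧ m ∈ cube d ⌊δ * nsup j⌋₊ ↔
      j ∈ {j ∈ cube d N | nsup m ≤ δ * nsup j} ∧ m ∈ cube d N := by
    intro j m
    rw [mem_filter, mem_cube, mem_cube, mem_cube,
      Nat.le_floor_iff (mul_nonneg hδ0.le (nsup_nonneg j))]
    refine ⟨fun ⟨hj, hm⟩ => ⟨⟨hj, hm⟩, ?_⟩, fun h => h.1⟩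
    have hjN : nsup j ≤ N := Nat.cast_le.2 hj
    have : ((univ.sup m : ℕ) : ℝ) ≤ N := by nlinarith [nsup_nonneg j]
    exact_mod_cast this
  simp_rw [sum_div]
  rw [sum_comm' hswap, mul_sum]
  refine sum_le_sum fun m _ => ?_
  rcases eq_or_ne m 0 with rfl | hm
  · simp [hg0]
  · calc ∑ j ∈ cube d N with nsup m ≤ δ * nsup j, g m / nsup j ^ (d + t)
        = g m * ∑ j ∈ cube d N with nsup m ≤ δ * nsup j, (nsup j ^ (d + t))⁻¹ := by
          rw [mul_sum]; rfl
      _ ≤ g m * (d * 2 ^ d * δ ^ t / nsup m ^ t) := by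
          gcongr
          · exact hg m
          · exact sum_inv_nsup_rpow_scaled_tail_le hd ht hδ0 hm N
      _ = d * 2 ^ d * δ ^ t * (g m / nsup m ^ t) := by ring

lemma norm_rpow_div_nsup_rpow_le {p t δ : ℝ}
    (hp : 0 ≤ p) (ht : 0 ≤ t) (hδ0 : 0 < δ) (hδ1 : δ < 1) (u : (Fin d → ℕ) → E)
    {j : Fin d → ℕ} (hj : j ≠ 0) :
    ‖u j‖ ^ p / nsup j ^ t ≤ 2 ^ p / δ ^ d *
      (∑ m ∈ cube d ⌊δ * nsup j⌋₊, ‖u j - u m‖ ^ p / ndist j m ^ (d + t) +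
        (∑ m ∈ cube d ⌊δ * nsup j⌋₊, ‖u m‖ ^ p) / nsup j ^ (d + t)) := by
  set R := nsup j
  set k := ⌊δ * R⌋₊
  have hR : 1 ≤ R := one_le_nsup hj
  have hkR : k < univ.sup j :=
    Nat.cast_lt.1 ((Nat.floor_le (by positivity)).trans_lt (by nlinarith) : (k : ℝ) < R)
  have hterm : ∀ m ∈ cube d k, ‖u j‖ ^ p ≤
      2 ^ p * (R ^ (d + t) * (‖u j - u m‖ ^ p / ndist j m ^ (d + t)) + ‖u m‖ ^ p) := by
    intro m hm
    have hmj : univ.sup m < univ.sup j := (mem_cube.1 hm).trans_lt hkR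
    have hdist : 1 ≤ ndist j m := one_le_ndist fun h => (h ▸ hmj).false
    have hdiff : ‖u j - u m‖ ^ p ≤ R ^ (d + t) * (‖u j - u m‖ ^ p / ndist j m ^ (d + t)) := by
      rw [mul_div_assoc', le_div_iff₀ (by positivity), mul_comm]
      gcongr
      exact ndist_le_nsup hmj.le
    calc ‖u j‖ ^ p ≤ 2 ^ p * (‖u j - u m‖ ^ p + ‖u m‖ ^ p) := norm_rpow_le_two_rpow_mul hp _ _
      _ ≤ _ := by gcongr
  set A := ∑ m ∈ cube d k, ‖u j - u m‖ ^ p / ndist j m ^ (d + t)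
  set B := ∑ m ∈ cube d k, ‖u m‖ ^ p
  have hsum : ((k : ℝ) + 1) ^ d * ‖u j‖ ^ p ≤ 2 ^ p * (R ^ (d + t) * A + B) := calc
    ((k : ℝ) + 1) ^ d * ‖u j‖ ^ p = ∑ m ∈ cube d k, ‖u j‖ ^ p := by
      rw [sum_const, card_cube, nsmul_eq_mul]; push_cast; rfl
    _ ≤ ∑ m ∈ cube d k, 2 ^ p * (R ^ (d + t) *
        (‖u j - u m‖ ^ p / ndist j m ^ (d + t)) + ‖u m‖ ^ p) := sum_le_sum hterm
    _ = 2 ^ p * (R ^ (d + t) * A + B) := by rw [← mul_sum, sum_add_distrib, ← mul_sum]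
  calc ‖u j‖ ^ p / R ^ t = (δ * R) ^ d * ‖u j‖ ^ p / (δ ^ d * R ^ (d + t)) := by
        rw [Real.rpow_add (by positivity), Real.rpow_natCast, mul_pow]
        field_simp
    _ ≤ ((k : ℝ) + 1) ^ d * ‖u j‖ ^ p / (δ ^ d * R ^ (d + t)) := by
        gcongr
        exact (Nat.lt_floor_add_one _).le
    _ ≤ 2 ^ p * (R ^ (d + t) * A + B) / (δ ^ d * R ^ (d + t)) := by gcongr
    _ = 2 ^ p / δ ^ d * (A + B / R ^ (d + t)) := by field_simp

lemma sum_cube_norm_rpow_div_le (hd : 1 ≤ d) {p t δ : ℝ} (hp : 0 < p) (ht : 1 ≤ t) (hδ0 : 0 < δ)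
    (hδ1 : δ < 1) (hθ : 2 ^ p / δ ^ d * (d * 2 ^ d * δ ^ t) ≤ 1 / 2) (u : (Fin d → ℕ) → E)
    (hu0 : u 0 = 0) (N : ℕ) :
    ∑ j ∈ cube d N, ‖u j‖ ^ p / nsup j ^ t ≤ 2 * (2 ^ p / δ ^ d) *
      ∑ j ∈ cube d N, ∑ m ∈ cube d ⌊δ * nsup j⌋₊, ‖u j - u m‖ ^ p / ndist j m ^ (d + t) := by
  set S := ∑ j ∈ cube d N, ‖u j‖ ^ p / nsup j ^ t
  set D := ∑ j ∈ cube d N, ∑ m ∈ cube d ⌊δ * nsup j⌋₊, ‖u j - u m‖ ^ p / ndist j m ^ (d + t)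
  set c := 2 ^ p / δ ^ d
  have hS : 0 ≤ S := sum_nonneg fun j _ => by have := nsup_nonneg j; positivity
  have hpoint : ∀ j ∈ cube d N, ‖u j‖ ^ p / nsup j ^ t ≤ c *
      (∑ m ∈ cube d ⌊δ * nsup j⌋₊, ‖u j - u m‖ ^ p / ndist j m ^ (d + t) +
        (∑ m ∈ cube d ⌊δ * nsup j⌋₊, ‖u m‖ ^ p) / nsup j ^ (d + t)) := by
    intro j _
    rcases eq_or_ne j 0 with rfl | hj
    · rw [hu0, norm_zero, Real.zero_rpow hp.ne', zero_div]
      have := nsup_nonneg (0 : Fin d → ℕ)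
      refine mul_nonneg (by positivity) (add_nonneg (sum_nonneg fun m _ => ?_) (by positivity))
      exact div_nonneg (by positivity) (Real.rpow_nonneg (Nat.cast_nonneg _) _)
    · exact norm_rpow_div_nsup_rpow_le hp.le (by linarith) hδ0 hδ1 u hj
  have herror := sum_cube_sum_cube_floor_div_le hd ht hδ0 hδ1.le
    (fun m => by positivity : 0 ≤ fun m => ‖u m‖ ^ p)
    (by simp [hu0, Real.zero_rpow hp.ne'] : ‖u 0‖ ^ p = 0) N
  have : S ≤ c * D + c * (d * 2 ^ d * δ ^ t) * S := calc
    S ≤ ∑ j ∈ cube d N, c * (∑ m ∈ cube d ⌊δ * nsup j⌋₊, ‖u j - u m‖ ^ p / ndist j m ^ (d + t) +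
        (∑ m ∈ cube d ⌊δ * nsup j⌋₊, ‖u m‖ ^ p) / nsup j ^ (d + t)) := sum_le_sum hpoint
    _ = c * D + c * ∑ j ∈ cube d N, (∑ m ∈ cube d ⌊δ * nsup j⌋₊, ‖u m‖ ^ p) / nsup j ^ (d + t) := by
        rw [← mul_sum, sum_add_distrib, mul_add]
    _ ≤ c * D + c * (d * 2 ^ d * δ ^ t) * S := by rw [mul_assoc]; gcongr
  linarith [mul_le_mul_of_nonneg_right hθ hS]

lemma tsum_le_of_forall_sum_cube_le {f : (Fin d → ℕ) → ℝ≥0∞} {a : ℝ≥0∞}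
    (h : ∀ N, ∑ j ∈ cube d N, f j ≤ a) : ∑' j, f j ≤ a :=
  ENNReal.summable.tsum_le_of_sum_le fun _ =>
    (sum_le_sum_of_subset fun _ hj => mem_cube.2 (le_sup (f := fun j => univ.sup j) hj)).trans
      (h _)

lemma tsum_norm_rpow_div_le (hd : 1 ≤ d) {p t δ : ℝ} (hp : 0 < p) (ht : 1 ≤ t) (hδ0 : 0 < δ)
    (hδ1 : δ < 1) (hθ : 2 ^ p / δ ^ d * (d * 2 ^ d * δ ^ t) ≤ 1 / 2) (u : (Fin d → ℕ) → E)
    (hu0 : u 0 = 0) :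
    ∑' j : {j : Fin d → ℕ // j ≠ 0}, ENNReal.ofReal (‖u j.1‖ ^ p / nsup j.1 ^ t) ≤
      ENNReal.ofReal (2 * (2 ^ p / δ ^ d)) *
        ∑' (j : Fin d → ℕ) (m : {m : Fin d → ℕ // m ≠ j}),
          ENNReal.ofReal (‖u j - u m.1‖ ^ p / ndist j m.1 ^ (d + t)) := by
  set w : (Fin d → ℕ) → ℝ := fun j => ‖u j‖ ^ p / nsup j ^ t
  set K : (Fin d → ℕ) → (Fin d → ℕ) → ℝ := fun j m => ‖u j - u m‖ ^ p / ndist j m ^ (d + t)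
  have hw : ∀ j, 0 ≤ w j := fun j =>
    div_nonneg (by positivity) (Real.rpow_nonneg (nsup_nonneg j) _)
  have hK : ∀ j m, 0 ≤ K j m := fun j m =>
    div_nonneg (by positivity) (Real.rpow_nonneg (Nat.cast_nonneg _) _)
  calc ∑' j : {j : Fin d → ℕ // j ≠ 0}, ENNReal.ofReal (w j)
      = ∑' j, ENNReal.ofReal (w j) :=
        tsum_subtype_eq_of_support_subset (f := fun j => ENNReal.ofReal (w j)) (s := {j | j ≠ 0})
          (Function.support_subset_iff'.2 fun j hj => by
            simp [w, not_not.1 hj, hu0, Real.zero_rpow hp.ne'])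
    _ ≤ ENNReal.ofReal (2 * (2 ^ p / δ ^ d)) * ∑' j, ∑' m, ENNReal.ofReal (K j m) :=
        tsum_le_of_forall_sum_cube_le fun N => calc
          ∑ j ∈ cube d N, ENNReal.ofReal (w j) = ENNReal.ofReal (∑ j ∈ cube d N, w j) :=
            (ENNReal.ofReal_sum_of_nonneg fun j _ => hw j).symm
          _ ≤ ENNReal.ofReal (2 * (2 ^ p / δ ^ d) *
              ∑ j ∈ cube d N, ∑ m ∈ cube d ⌊δ * nsup j⌋₊, K j m) :=
            ENNReal.ofReal_le_ofReal (sum_cube_norm_rpow_div_le hd hp ht hδ0 hδ1 hθ u hu0 N)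
          _ = ENNReal.ofReal (2 * (2 ^ p / δ ^ d)) *
              ∑ j ∈ cube d N, ∑ m ∈ cube d ⌊δ * nsup j⌋₊, ENNReal.ofReal (K j m) := by
            rw [ENNReal.ofReal_mul (by positivity),
              ENNReal.ofReal_sum_of_nonneg fun j _ => sum_nonneg fun m _ => hK j m]
            simp_rw [ENNReal.ofReal_sum_of_nonneg fun m _ => hK _ m]
          _ ≤ ENNReal.ofReal (2 * (2 ^ p / δ ^ d)) * ∑' j, ∑' m, ENNReal.ofReal (K j m) := by
            gcongr
            exact (sum_le_sum fun j _ => ENNReal.sum_le_tsum _).trans (ENNReal.sum_le_tsum _)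
    _ = ENNReal.ofReal (2 * (2 ^ p / δ ^ d)) *
          ∑' (j : Fin d → ℕ) (m : {m : Fin d → ℕ // m ≠ j}), ENNReal.ofReal (K j m) := by
        congr 1
        refine tsum_congr fun j => (tsum_subtype_eq_of_support_subset (s := {m | m ≠ j}) ?_).symm
        exact Function.support_subset_iff'.2 fun m hm => by
          simp [K, not_not.1 hm, Real.zero_rpow hp.ne']

lemma exists_absorbing_scale (p : ℝ) (hd : 1 ≤ d) {ε : ℝ} (hε : 0 < ε) :
    ∃ δ : ℝ, 0 < δ ∧ δ < 1 ∧ 2 ^ p / δ ^ d * (d * 2 ^ d * δ ^ ((d : ℝ) + ε)) ≤ 1 / 2 := by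
  have hC : (0 : ℝ) < 2 ^ p * d * 2 ^ d := by
    have : (0 : ℝ) < d := by exact_mod_cast hd
    positivity
  obtain ⟨δ, hδ0, hδ1, hδε⟩ := exists_pos_lt_one_rpow_le hε (inv_pos.2 (mul_pos two_pos hC))
  refine ⟨δ, hδ0, hδ1, ?_⟩
  calc 2 ^ p / δ ^ d * (d * 2 ^ d * δ ^ ((d : ℝ) + ε)) = 2 ^ p * d * 2 ^ d * δ ^ ε := by
        rw [Real.rpow_add hδ0, Real.rpow_natCast]
        field_simp
    _ ≤ 2 ^ p * d * 2 ^ d * (2 * ((2 : ℝ) ^ p * d * 2 ^ d))⁻¹ := by gcongr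
    _ = 1 / 2 := by field_simp

/-- Fractional discrete Hardy inequality on `ℤ₊^d` in the critical case `sp = d`,
with an extra power `ε > 0`, for functions with `u(0) = 0`. -/
theorem frac_hardy_sp_eq_d (d : ℕ) (s p ε : ℝ) (hs : 0 < s) (hp : 0 < p)
    (hspd : s * p = d) (hε : 0 < ε) :
    ∃ c : ℝ, 0 ≤ c ∧ ∀ u : (Fin d → ℕ) → ℂ, u 0 = 0 →
      (∑' (j : {j : Fin d → ℕ // j ≠ 0}),
          ENNReal.ofReal (‖u j.1‖ ^ p / nsup j.1 ^ (s * p + ε)))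
        ≤ ENNReal.ofReal c *
            (∑' (j : Fin d → ℕ) (m : {m : Fin d → ℕ // m ≠ j}),
              ENNReal.ofReal
                (‖u j - u m.1‖ ^ p / ndist j m.1 ^ (s * p + d + ε))) ∧
      ENNReal.ofReal c *
            (∑' (j : Fin d → ℕ) (m : {m : Fin d → ℕ // m ≠ j}),
              ENNReal.ofReal
                (‖u j - u m.1‖ ^ p / ndist j m.1 ^ (s * p + d + ε)))
        ≤ ENNReal.ofReal c *
            ∑' (j : Fin d → ℕ) (m : {m : Fin d → ℕ // m ≠ j}),
              ENNReal.ofReal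
                (‖u j - u m.1‖ ^ p / ndist j m.1 ^ (s * p + d)) := by
  have hd : 1 ≤ d := by
    have : (0 : ℝ) < d := hspd ▸ mul_pos hs hp
    exact_mod_cast this
  obtain ⟨δ, hδ0, hδ1, hθ⟩ := exists_absorbing_scale p hd hε
  refine ⟨2 * (2 ^ p / δ ^ d), by positivity, fun u hu0 => ⟨?_, ?_⟩⟩
  · rw [hspd, add_assoc]
    have ht : 1 ≤ (d : ℝ) + ε := by linarith [(Nat.one_le_cast (α := ℝ)).2 hd]
    exact tsum_norm_rpow_div_le hd hp ht hδ0 hδ1 hθ u hu0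
  · gcongr _ * ?_
    refine ENNReal.tsum_le_tsum fun j => ENNReal.tsum_le_tsum fun m => ENNReal.ofReal_le_ofReal ?_
    have := one_le_ndist m.2
    gcongr _ / ndist j m.1 ^ ?_
    linarith
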